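/- arXiv:1111.7253 — 7 statements merged into one kernel-verified Lean document; each statement's English description precedes it below -/
import Mathlib

section
/- Let x_1, …, x_m be pairwise distinct points of the Euclidean space ℝⁿ such that for all pairwise distinct indices i, j, k the angle ∠ x_i x_j x_k (at vertex x_j) is at most π/2. Then m ≤ 2ⁿ. -/
/-!
Let `K` be the convex hull of the points. Since no angle is obtuse, `K` lies in the slab between
the hyperplanes through `x i` and `x j` perpendicular to `x j - x i`. Hence the copies
`x i + (K - x i) / 2`, all contained in `K`, are pairwise separated by perpendicular bisectors
and so have disjoint interiors. Each has volume `vol K / 2 ^ n`, so `m ≤ 2 ^ n` once `K` is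
full-dimensional, which we may assume after passing to the span of the points.
-/

open EuclideanGeometry MeasureTheory Module RealInnerProductSpace Set AffineMap

theorem InnerProductGeometry.angle_le_pi_div_two_iff {V : Type*} [NormedAddCommGroup V]
    [InnerProductSpace ℝ V] (x y : V) : angle x y ≤ Real.pi / 2 ↔ 0 ≤ ⟪x, y⟫ := by
  rw [angle, Real.arccos_le_pi_div_two]
  rcases eq_or_ne x 0 with rfl | hx
  · simp
  rcases eq_or_ne y 0 with rfl | hy
  · simp
  rw [le_div_iff₀ (by positivity), zero_mul]

theorem le_two_pow_of_mul_ofReal_inv_two_pow_le {N d : ℕ} {a : ENNReal} (ha0 : a ≠ 0)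
    (hat : a ≠ ⊤) (h : N * (ENNReal.ofReal (2⁻¹ ^ d) * a) ≤ a) : N ≤ 2 ^ d := by
  have h1 : ENNReal.ofReal (N * 2⁻¹ ^ d) ≤ 1 := by
    rw [ENNReal.ofReal_mul (by positivity), ENNReal.ofReal_natCast,
      ← ENNReal.mul_le_mul_iff_left ha0 hat, one_mul, mul_assoc]
    exact h
  have h2 : (N : ℝ) * 2⁻¹ ^ d ≤ 1 := ENNReal.ofReal_le_one.1 h1
  rw [inv_pow, ← div_eq_mul_inv, div_le_one (by positivity)] at h2
  exact_mod_cast h2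

section

variable {V : Type*} [NormedAddCommGroup V] [InnerProductSpace ℝ V] {ι : Type*}

def IsNonobtuse (x : ι → V) : Prop :=
  ∀ i j k, 0 ≤ ⟪x i - x j, x k - x j⟫

theorem isNonobtuse_of_angle_le_pi_div_two {x : ι → V}
    (h : ∀ i j k, i ≠ j → j ≠ k → i ≠ k → ∠ (x i) (x j) (x k) ≤ Real.pi / 2) :
    IsNonobtuse x := by
  intro i j k
  rcases eq_or_ne i j with rfl | hij
  · simp
  rcases eq_or_ne j k with rfl | hjk
  · simp
  rcases eq_or_ne i k with rfl | hik
  · exact real_inner_self_nonneg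
  exact (InnerProductGeometry.angle_le_pi_div_two_iff _ _).1 (h i j k hij hjk hik)

theorem IsNonobtuse.convexHull_subset {x : ι → V} (hx : IsNonobtuse x) (i j : ι) :
    convexHull ℝ (range x) ⊆ {p | 0 ≤ ⟪p - x j, x i - x j⟫} := by
  refine convexHull_min (range_subset_iff.2 fun k => hx k j i) ?_
  simpa only [LinearMap.flip_apply, innerₛₗ_apply_apply, inner_sub_left, sub_nonneg] using
    convex_halfSpace_ge (innerₛₗ ℝ |>.flip (x i - x j)).isLinear ⟪x j, x i - x j⟫

theorem inner_homothety_half_sub_midpoint (a b p : V) :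
    ⟪homothety a (2⁻¹ : ℝ) p - midpoint ℝ a b, a - b⟫ = 2⁻¹ * ⟪p - b, a - b⟫ := by
  have : homothety a (2⁻¹ : ℝ) p - midpoint ℝ a b = (2⁻¹ : ℝ) • (p - b) := by
    rw [homothety_apply, midpoint_eq_smul_add]
    simp only [vsub_eq_sub, vadd_eq_add, invOf_eq_inv]
    module
  rw [this, real_inner_smul_left]

theorem MeasureTheory.Measure.addHaar_setOf_inner_sub_eq_zero [FiniteDimensional ℝ V]
    [MeasurableSpace V] [BorelSpace V] (μ : Measure V) [μ.IsAddHaarMeasure] (c : V) {v : V}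
    (hv : v ≠ 0) : μ {p | ⟪p - c, v⟫ = 0} = 0 := by
  have hA : {p | ⟪p - c, v⟫ = 0} = (AffineSubspace.mk' c (ℝ ∙ v)ᗮ : Set V) := by
    ext p
    simp [AffineSubspace.mem_mk', Submodule.mem_orthogonal_singleton_iff_inner_left]
  rw [hA]
  refine μ.addHaar_affineSubspace _ fun htop => hv ?_
  have := congrArg AffineSubspace.direction htop
  rwa [AffineSubspace.direction_mk', AffineSubspace.direction_top,
    Submodule.orthogonal_eq_top_iff, Submodule.span_singleton_eq_bot] at this

theorem IsNonobtuse.aedisjoint_homothety_half [FiniteDimensional ℝ V] [MeasurableSpace V]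
    [BorelSpace V] (μ : Measure V) [μ.IsAddHaarMeasure] {x : ι → V} (hx : IsNonobtuse x)
    {i j : ι} (hij : x i ≠ x j) :
    AEDisjoint μ (homothety (x i) (2⁻¹ : ℝ) '' convexHull ℝ (range x))
      (homothety (x j) (2⁻¹ : ℝ) '' convexHull ℝ (range x)) := by
  refine measure_mono_null ?_
    (μ.addHaar_setOf_inner_sub_eq_zero (midpoint ℝ (x i) (x j)) (sub_ne_zero.2 hij))
  rintro _ ⟨⟨p, hp, rfl⟩, ⟨q, hq, hqp⟩⟩
  have hpi := inner_homothety_half_sub_midpoint (x i) (x j) p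
  have hqj := inner_homothety_half_sub_midpoint (x j) (x i) q
  rw [hqp, midpoint_comm, ← neg_sub (x i) (x j), inner_neg_right, neg_sub] at hqj
  have hp' := hx.convexHull_subset i j hp
  have hq' := hx.convexHull_subset j i hq
  simp only [mem_ofPred_eq] at hp' hq' ⊢
  linarith

theorem IsNonobtuse.card_le_two_pow_finrank [FiniteDimensional ℝ V] [Fintype ι] {x : ι → V}
    (hx : IsNonobtuse x) (hinj : Function.Injective x)
    (hspan : affineSpan ℝ (range x) = ⊤) : Fintype.card ι ≤ 2 ^ finrank ℝ V := by
  borelize V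
  set μ : Measure V := Measure.addHaar
  set K := convexHull ℝ (range x)
  set T : ι → Set V := fun i => homothety (x i) (2⁻¹ : ℝ) '' K
  have hKconv : Convex ℝ K := convex_convexHull ℝ _
  have hKcpt : IsCompact K := (finite_range x).isCompact_convexHull ℝ
  have hK0 : μ K ≠ 0 := by
    refine (μ.measure_pos_of_nonempty_interior ?_).ne'
    rwa [hKconv.interior_nonempty_iff_affineSpan_eq_top, affineSpan_convexHull]
  have hTK : ⋃ i, T i ⊆ K := iUnion_subset fun i => by
    rintro _ ⟨p, hp, rfl⟩
    rw [homothety_eq_lineMap]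
    exact hKconv.lineMap_mem (subset_convexHull ℝ _ (mem_range_self i)) hp
      ⟨by norm_num, by norm_num⟩
  have hTμ (i : ι) : μ (T i) = ENNReal.ofReal (2⁻¹ ^ finrank ℝ V) * μ K := by
    rw [Measure.addHaar_image_homothety, abs_of_pos (by norm_num)]
  have hTmeas (i : ι) : NullMeasurableSet (T i) μ :=
    (hKcpt.image (homothety_continuous _ _)).isClosed.measurableSet.nullMeasurableSet
  have hsum : ∑ i, μ (T i) ≤ μ K := by
    rw [← tsum_fintype (L := .unconditional ι),
      ← measure_iUnion₀ (fun i j hij => hx.aedisjoint_homothety_half μ (hinj.ne hij)) hTmeas]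
    exact measure_mono hTK
  simp only [hTμ, Finset.sum_const, Finset.card_univ, nsmul_eq_mul] at hsum
  exact le_two_pow_of_mul_ofReal_inv_two_pow_le hK0 hKcpt.measure_lt_top.ne hsum

theorem IsNonobtuse.card_le_two_pow_finrank_vectorSpan [Fintype ι] {x : ι → V}
    (hx : IsNonobtuse x) (hinj : Function.Injective x) :
    Fintype.card ι ≤ 2 ^ finrank ℝ (vectorSpan ℝ (range x)) := by
  rcases isEmpty_or_nonempty ι with _ | ⟨⟨i₀⟩⟩
  · simp
  set E := vectorSpan ℝ (range x)
  let y (i : ι) : E := ⟨x i - x i₀, vsub_mem_vectorSpan ℝ (mem_range_self i) (mem_range_self i₀)⟩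
  have hy (i j : ι) : ((y i - y j : E) : V) = x i - x j := by simp [y]
  have hyx : IsNonobtuse y := fun i j k => by
    simpa only [Submodule.coe_inner, hy] using hx i j k
  have hyinj : Function.Injective y := fun i j hij =>
    hinj (sub_eq_zero.1 (by rw [← hy, hij, sub_self, ZeroMemClass.coe_zero]))
  have hspan : Submodule.span ℝ (range y) = ⊤ := by
    apply Submodule.map_injective_of_injective E.injective_subtype
    rw [Submodule.map_span, ← range_comp, Submodule.map_subtype_top]
    exact (vectorSpan_range_eq_span_range_vsub_right ℝ x i₀).symm
  have hy₀ : y i₀ = 0 := Subtype.ext (sub_self _)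
  have hyaff : affineSpan ℝ (range y) = ⊤ := by
    rw [AffineSubspace.affineSpan_eq_top_iff_vectorSpan_eq_top_of_nonempty _ _ _
      ⟨y i₀, mem_range_self i₀⟩, vectorSpan_range_eq_span_range_vsub_right ℝ y i₀]
    simpa only [vsub_eq_sub, hy₀, sub_zero] using hspan
  exact hyx.card_le_two_pow_finrank hyinj hyaff

end

theorem erdos_angle_bound (n m : ℕ) (x : Fin m → EuclideanSpace ℝ (Fin n))
    (hinj : Function.Injective x)
    (hang : ∀ i j k : Fin m, i ≠ j → j ≠ k → i ≠ k →
      EuclideanGeometry.angle (x i) (x j) (x k) ≤ Real.pi / 2) :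
    m ≤ 2 ^ n := by
  calc m = Fintype.card (Fin m) := (Fintype.card_fin m).symm
    _ ≤ 2 ^ finrank ℝ (vectorSpan ℝ (range x)) :=
      (isNonobtuse_of_angle_le_pi_div_two hang).card_le_two_pow_finrank_vectorSpan hinj
    _ ≤ 2 ^ n := by
      gcongr
      · norm_num
      · simpa using (vectorSpan ℝ (range x)).finrank_le
end

section
/- Let x_1, …, x_m be pairwise distinct points of the Euclidean space ℝⁿ such that for all pairwise distinct indices i, j, k the angle ∠ x_i x_j x_k (at vertex x_j) is at most π/2. Let K be the convex hull of {x_1, …, x_m}, let x ∈ K, fix an index i, and let z = (x_i + x)/2 be the midpoint of the segment [x_i, x]. Then for every index j one has dist(z, x_i) ≤ dist(z, x_j). -/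
open EuclideanGeometry

/-!
With `z` the midpoint of `[x i, p]`, one has
`dist z (x j) ^ 2 = dist z (x i) ^ 2 + ⟪x i - x j, p - x j⟫`, so it suffices that `p` lies in the
half-space `{y | 0 ≤ ⟪x i - x j, y - x j⟫}`. That half-space contains every vertex `x k` (for
`k ≠ i, j` this is the angle condition at `x j`), hence the convex hull.
-/

section

variable {V : Type*} [NormedAddCommGroup V] [InnerProductSpace ℝ V]

namespace InnerProductGeometry

theorem angle_le_pi_div_two_iff_inner_nonneg {x y : V} :
    angle x y ≤ Real.pi / 2 ↔ 0 ≤ (inner ℝ x y : ℝ) := by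
  rw [angle, Real.arccos_le_pi_div_two]
  rcases eq_or_ne x 0 with rfl | hx
  · simp
  rcases eq_or_ne y 0 with rfl | hy
  · simp
  rw [le_div_iff₀ (by positivity), zero_mul]

end InnerProductGeometry

theorem convex_setOf_inner_sub_nonneg (v b : V) :
    Convex ℝ {y : V | 0 ≤ (inner ℝ v (y - b) : ℝ)} := by
  simp only [inner_sub_right, sub_nonneg]
  exact convex_halfSpace_ge (innerₛₗ ℝ v).isLinear _

theorem dist_midpoint_sq_eq_dist_midpoint_left_sq_add_inner (a b p : V) :
    dist (midpoint ℝ a p) b ^ 2 = dist (midpoint ℝ a p) a ^ 2 + inner ℝ (a - b) (p - b) := by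
  rw [dist_eq_norm, dist_eq_norm, midpoint_sub_left, midpoint_eq_smul_add, invOf_eq_inv,
    ← real_inner_self_eq_norm_sq, ← real_inner_self_eq_norm_sq]
  have : (2 : ℝ)⁻¹ • (a + p) - b = (2 : ℝ)⁻¹ • (a - b) + (2 : ℝ)⁻¹ • (p - b) := by module
  rw [this]
  simp only [inner_add_left, inner_add_right, inner_sub_left, inner_sub_right,
    real_inner_smul_left, real_inner_smul_right, real_inner_comm a p, real_inner_comm a b,
    real_inner_comm b p]
  ring

theorem dist_midpoint_left_le_iff_inner_nonneg (a b p : V) :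
    dist (midpoint ℝ a p) a ≤ dist (midpoint ℝ a p) b ↔ 0 ≤ (inner ℝ (a - b) (p - b) : ℝ) := by
  rw [← sq_le_sq₀ dist_nonneg dist_nonneg,
    dist_midpoint_sq_eq_dist_midpoint_left_sq_add_inner a b p]
  exact le_add_iff_nonneg_right (dist (midpoint ℝ a p) a ^ 2)

end

theorem midpoint_closest_vertex_general (n m : ℕ) (x : Fin m → EuclideanSpace ℝ (Fin n))
    (hang : ∀ i j k : Fin m, i ≠ j → j ≠ k → i ≠ k →
      EuclideanGeometry.angle (x i) (x j) (x k) ≤ Real.pi / 2)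
    (p : EuclideanSpace ℝ (Fin n)) (hp : p ∈ convexHull ℝ (Set.range x))
    (i : Fin m) :
    ∀ j : Fin m,
      dist (midpoint ℝ (x i) p) (x i) ≤ dist (midpoint ℝ (x i) p) (x j) := by
  intro j
  rw [dist_midpoint_left_le_iff_inner_nonneg]
  refine convexHull_min ?_ (convex_setOf_inner_sub_nonneg _ _) hp
  rintro _ ⟨k, rfl⟩
  change 0 ≤ inner ℝ (x i - x j) (x k - x j)
  by_cases hij : i = j
  · simp [hij]
  by_cases hkj : k = j
  · simp [hkj]
  by_cases hik : i = k
  · exact hik ▸ real_inner_self_nonneg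
  exact InnerProductGeometry.angle_le_pi_div_two_iff_inner_nonneg.mp
    (hang i j k hij (Ne.symm hkj) hik)

theorem midpoint_closest_vertex (n m : ℕ) (x : Fin m → EuclideanSpace ℝ (Fin n))
    (hinj : Function.Injective x)
    (hang : ∀ i j k : Fin m, i ≠ j → j ≠ k → i ≠ k →
      EuclideanGeometry.angle (x i) (x j) (x k) ≤ Real.pi / 2)
    (p : EuclideanSpace ℝ (Fin n)) (hp : p ∈ convexHull ℝ (Set.range x))
    (i : Fin m) :
    ∀ j : Fin m,
      dist (midpoint ℝ (x i) p) (x i) ≤ dist (midpoint ℝ (x i) p) (x j) :=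
  midpoint_closest_vertex_general n m x hang p hp i
end

section
/- Let x_1, …, x_m be pairwise distinct points of the Euclidean space ℝⁿ such that for all pairwise distinct indices i, j, k the angle ∠ x_i x_j x_k (at vertex x_j) is at most π/2. Let K be the convex hull of {x_1, …, x_m}, and for each i let h_i : ℝⁿ → ℝⁿ be the homothety h_i(z) = x_i + (z − x_i)/2 with center x_i and ratio 1/2. Then for all i ≠ j the interiors of h_i(K) and h_j(K) are disjoint. -/
/-!
Let `d = x j - x i`. The acute-angle condition at the vertices `x i` and `x j` says that every
`x k` lies in the slab `⟪d, x i⟫ ≤ ⟪d, ·⟫ ≤ ⟪d, x j⟫`, hence so does `K`. Shrinking `K` by half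
towards `x i` (resp. `x j`) lands in the half-space `⟪d, ·⟫ ≤ c` (resp. `≥ c`), where `c` is the
value at the midpoint of `x i` and `x j`; the interiors of these half-spaces are disjoint.
-/

open EuclideanGeometry Set

namespace InnerProductGeometry

variable {V : Type*} [NormedAddCommGroup V] [InnerProductSpace ℝ V]

theorem inner_nonneg_of_angle_le_pi_div_two {u v : V} (h : angle u v ≤ Real.pi / 2) :
    0 ≤ inner ℝ u v := by
  rw [← cos_angle_mul_norm_mul_norm]
  exact mul_nonneg (Real.cos_nonneg_of_neg_pi_div_two_le_of_le
    (by linarith [angle_nonneg u v, Real.pi_pos]) h) (by positivity)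

end InnerProductGeometry

section Homothety

variable {E F : Type*} [AddCommGroup E] [Module ℝ E] [FunLike F E ℝ] [LinearMapClass F ℝ E ℝ]

theorem apply_homothety (φ : F) (a z : E) (t : ℝ) :
    φ (AffineMap.homothety a t z) = φ a + t * (φ z - φ a) := by
  simp only [AffineMap.homothety_apply, vsub_eq_sub, vadd_eq_add, map_add, map_smul, map_sub,
    smul_eq_mul]
  ring

theorem image_homothety_subset_preimage_Iic (φ : F) {K : Set E} {a : E} {c t : ℝ}
    (ht : 0 ≤ t) (hK : K ⊆ φ ⁻¹' Iic c) :
    AffineMap.homothety a t '' K ⊆ φ ⁻¹' Iic (φ a + t * (c - φ a)) := by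
  rintro _ ⟨z, hz, rfl⟩
  have : φ z ≤ c := hK hz
  simp only [mem_preimage, mem_Iic, apply_homothety]
  gcongr

theorem image_homothety_subset_preimage_Ici (φ : F) {K : Set E} {a : E} {c t : ℝ}
    (ht : 0 ≤ t) (hK : K ⊆ φ ⁻¹' Ici c) :
    AffineMap.homothety a t '' K ⊆ φ ⁻¹' Ici (φ a + t * (c - φ a)) := by
  rintro _ ⟨z, hz, rfl⟩
  have : c ≤ φ z := hK hz
  simp only [mem_preimage, mem_Ici, apply_homothety]
  gcongr

variable [TopologicalSpace E] [ContinuousAdd E] [ContinuousSMul ℝ E]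

theorem disjoint_interior_image_homothety (φ : StrongDual ℝ E) (hφ : φ ≠ 0) {K : Set E} {a b : E}
    (hK : K ⊆ φ ⁻¹' Icc (φ a) (φ b)) {s t : ℝ} (hs : 0 ≤ s) (ht : 0 ≤ t) (hst : s + t ≤ 1) :
    Disjoint (interior (AffineMap.homothety a s '' K))
      (interior (AffineMap.homothety b t '' K)) := by
  rcases K.eq_empty_or_nonempty with rfl | ⟨z, hz⟩
  · simp
  have hab : φ a ≤ φ b := (hK hz).1.trans (hK hz).2
  have hopen := φ.isOpenMap_of_ne_zero hφ
  have ha := interior_mono (image_homothety_subset_preimage_Iic φ (a := a) hs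
    (hK.trans (preimage_mono Icc_subset_Iic_self)))
  have hb := interior_mono (image_homothety_subset_preimage_Ici φ (a := b) ht
    (hK.trans (preimage_mono Icc_subset_Ici_self)))
  refine Disjoint.mono (ha.trans hopen.interior_preimage_subset_preimage_interior)
    (hb.trans hopen.interior_preimage_subset_preimage_interior) ?_
  rw [interior_Iic, interior_Ici]
  refine (Ioi_disjoint_Iio_of_le ?_).symm.preimage φ
  -- the two thresholds differ by `(1 - s - t) * (φ b - φ a) ≥ 0`
  nlinarith

end Homothety

section AcuteFamily

variable {ι V : Type*} [NormedAddCommGroup V] [InnerProductSpace ℝ V] {x : ι → V}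

theorem inner_sub_nonneg_of_angle_le_pi_div_two
    (hang : ∀ i j k, i ≠ j → j ≠ k → i ≠ k → ∠ (x i) (x j) (x k) ≤ Real.pi / 2)
    {i j : ι} (hij : i ≠ j) (k : ι) : 0 ≤ inner ℝ (x j - x i) (x k - x i) := by
  rcases eq_or_ne k i with rfl | hki
  · simp
  rcases eq_or_ne k j with rfl | hkj
  · exact real_inner_self_nonneg
  exact InnerProductGeometry.inner_nonneg_of_angle_le_pi_div_two
    (hang j i k hij.symm hki.symm hkj.symm)

theorem convexHull_range_subset_preimage_Icc
    (hang : ∀ i j k, i ≠ j → j ≠ k → i ≠ k → ∠ (x i) (x j) (x k) ≤ Real.pi / 2)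
    {i j : ι} (hij : i ≠ j) :
    convexHull ℝ (range x) ⊆
      innerSL ℝ (x j - x i) ⁻¹' Icc (inner ℝ (x j - x i) (x i)) (inner ℝ (x j - x i) (x j)) := by
  refine convexHull_min ?_ ((convex_Icc _ _).linear_preimage (innerSL ℝ (x j - x i)).toLinearMap)
  rintro _ ⟨k, rfl⟩
  have hi := inner_sub_nonneg_of_angle_le_pi_div_two hang hij k
  have hj := inner_sub_nonneg_of_angle_le_pi_div_two hang hij.symm k
  simp only [mem_preimage, innerSL_apply_apply, mem_Icc]
  simp only [inner_sub_left, inner_sub_right, real_inner_comm (x i) (x j)] at hi hj ⊢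
  constructor <;> linarith

end AcuteFamily

theorem homothety_interiors_disjoint (n m : ℕ) (x : Fin m → EuclideanSpace ℝ (Fin n))
    (hinj : Function.Injective x)
    (hang : ∀ i j k : Fin m, i ≠ j → j ≠ k → i ≠ k →
      EuclideanGeometry.angle (x i) (x j) (x k) ≤ Real.pi / 2)
    (i j : Fin m) (hij : i ≠ j) :
    Disjoint
      (interior (AffineMap.homothety (x i) (2⁻¹ : ℝ) '' convexHull ℝ (Set.range x)))
      (interior (AffineMap.homothety (x j) (2⁻¹ : ℝ) '' convexHull ℝ (Set.range x))) := by
  have hd : x j - x i ≠ 0 := sub_ne_zero.2 (hinj.ne hij.symm)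
  have hφ : innerSL ℝ (x j - x i) ≠ 0 := fun h => hd <| inner_self_eq_zero.1 <| by
    simpa only [innerSL_apply_apply, zero_apply] using congr($h (x j - x i))
  exact disjoint_interior_image_homothety _ hφ (convexHull_range_subset_preimage_Icc hang hij)
    (by norm_num) (by norm_num) (by norm_num)
end

section
/- Let Γ be a discrete cocompact subgroup of isometries of ℝⁿ such that ℰ is nonempty and Γ has the reflection property and the midpoint property. Let X, Y ∈ ℰ with X ∈ 𝔖(Y). Then for every vector v ∈ ℝⁿ such that γ^# v = v for all γ ∈ Γ_{X,Y}, one has Γ_Y^#(v) = {v, −v}. -/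
open Metric

noncomputable section

/-- The rotational (linear) part of an isometry of Euclidean space,
evaluated at a vector `v`. -/
def rotPart {n : ℕ} (γ : EuclideanSpace ℝ (Fin n) ≃ᵢ EuclideanSpace ℝ (Fin n))
    (v : EuclideanSpace ℝ (Fin n)) : EuclideanSpace ℝ (Fin n) :=
  γ v - γ 0

/-- A subgroup of isometries acts properly discontinuously. -/
def ProperlyDisc {n : ℕ}
    (Γ : Subgroup (EuclideanSpace ℝ (Fin n) ≃ᵢ EuclideanSpace ℝ (Fin n))) : Prop :=
  ∀ K : Set (EuclideanSpace ℝ (Fin n)), IsCompact K →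
    {γ : EuclideanSpace ℝ (Fin n) ≃ᵢ EuclideanSpace ℝ (Fin n) |
      γ ∈ Γ ∧ ((γ '' K) ∩ K).Nonempty}.Finite

/-- A subgroup of isometries acts cocompactly. -/
def CocompactAct {n : ℕ}
    (Γ : Subgroup (EuclideanSpace ℝ (Fin n) ≃ᵢ EuclideanSpace ℝ (Fin n))) : Prop :=
  ∃ K : Set (EuclideanSpace ℝ (Fin n)), IsCompact K ∧ ⋃ γ ∈ Γ, γ '' K = Set.univ

/-- The fixed-point set of a subgroup of isometries. -/
def FixSet {n : ℕ}
    (H : Subgroup (EuclideanSpace ℝ (Fin n) ≃ᵢ EuclideanSpace ℝ (Fin n))) :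
    Set (EuclideanSpace ℝ (Fin n)) :=
  {y | ∀ h ∈ H, h y = y}

/-- `ℰ`: the set of points which are isolated points of the fixed-point set of some
subgroup of `Γ`. -/
def SingSet {n : ℕ}
    (Γ : Subgroup (EuclideanSpace ℝ (Fin n) ≃ᵢ EuclideanSpace ℝ (Fin n))) :
    Set (EuclideanSpace ℝ (Fin n)) :=
  {x | ∃ H, H ≤ Γ ∧ x ∈ FixSet H ∧ ∃ ε > 0, FixSet H ∩ ball x ε = {x}}

/-- The Voronoi cell of `x` with respect to a set `E`. -/
def Vor {n : ℕ} (E : Set (EuclideanSpace ℝ (Fin n))) (x : EuclideanSpace ℝ (Fin n)) :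
    Set (EuclideanSpace ℝ (Fin n)) :=
  {z | ∀ y ∈ E, dist z x ≤ dist z y}

/-- `𝔖(x)`: the set of points `y ∈ ℰ`, `y ≠ x`, whose Voronoi cell meets that of `x`
in a face of dimension `n - 1`. -/
def SS {n : ℕ}
    (Γ : Subgroup (EuclideanSpace ℝ (Fin n) ≃ᵢ EuclideanSpace ℝ (Fin n)))
    (x : EuclideanSpace ℝ (Fin n)) : Set (EuclideanSpace ℝ (Fin n)) :=
  {y | y ∈ SingSet Γ ∧ y ≠ x ∧
    Module.finrank ℝ
      (affineSpan ℝ (Vor (SingSet Γ) x ∩ Vor (SingSet Γ) y)).direction = n - 1}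

/-- `Γ_x^#(v)`: the orbit of the vector `v` under the rotational parts of the
stabilizer of `x` in `Γ`. -/
def rotSet {n : ℕ}
    (Γ : Subgroup (EuclideanSpace ℝ (Fin n) ≃ᵢ EuclideanSpace ℝ (Fin n)))
    (x v : EuclideanSpace ℝ (Fin n)) : Set (EuclideanSpace ℝ (Fin n)) :=
  {w | ∃ γ ∈ Γ, γ x = x ∧ rotPart γ v = w}

/-- The reflection property. -/
def ReflProp {n : ℕ}
    (Γ : Subgroup (EuclideanSpace ℝ (Fin n) ≃ᵢ EuclideanSpace ℝ (Fin n))) : Prop :=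
  ∀ x ∈ SingSet Γ, ∀ y ∈ SS Γ x, rotSet Γ x (x - y) = {x - y, y - x}

/-- The midpoint property. -/
def MidProp {n : ℕ}
    (Γ : Subgroup (EuclideanSpace ℝ (Fin n) ≃ᵢ EuclideanSpace ℝ (Fin n))) : Prop :=
  ∀ x ∈ SingSet Γ, ∀ y ∈ SS Γ x,
    midpoint ℝ x y ∈ Vor (SingSet Γ) x ∩ Vor (SingSet Γ) y ∧
    ∀ z ∈ SingSet Γ, z ≠ x → z ≠ y → midpoint ℝ x y ∉ Vor (SingSet Γ) z

/-!
Put `u = Y - X`. By the reflection property the rotational parts of `Γ_Y` send `u` only to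
`±u`, and an element of `Γ_Y` fixing `u` fixes `X`, hence fixes `v`. So `Γ_Y^#(v) = {v, w}`
with `w = γ₀^# v` for any `γ₀ ∈ Γ_Y` reversing `u`, and `v + w` is fixed by all of `Γ_Y^#`.
As `Y` is an isolated fixed point, `Γ_Y^#` fixes no nonzero vector, so `w = -v`.
-/

namespace MulAction

variable {G A : Type*} [Group G] [AddCommGroup A] [DistribMulAction G A] {u v : A} {g₀ : G}

theorem smul_eq_or_eq_smul_of_stabilizer_le (hu : orbit G u ⊆ {u, -u}) (hg₀ : g₀ • u = -u)
    (hv : stabilizer G u ≤ stabilizer G v) (g : G) : g • v = v ∨ g • v = g₀ • v := by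
  rcases hu (mem_orbit u g) with hgu | hgu
  · exact Or.inl (hv hgu)
  · have hstab : (g₀⁻¹ * g) • u = u := by
      rw [mul_smul, hgu, ← hg₀, inv_smul_smul]
    right
    rw [← inv_smul_eq_iff, ← mul_smul]
    exact hv hstab

theorem add_smul_mem_fixedPoints (h : ∀ g : G, g • v = v ∨ g • v = g₀ • v) :
    v + g₀ • v ∈ fixedPoints G A := by
  intro g
  have hg₀' := h (g * g₀)
  rw [mul_smul] at hg₀'
  rw [smul_add]
  rcases h g with h₁ | h₁ <;> rcases hg₀' with h₂ | h₂
  · rw [h₁, h₂, ← smul_left_cancel g (h₁.trans h₂.symm)]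
  · rw [h₁, h₂]
  · rw [h₁, h₂, add_comm]
  · rw [h₁, h₂, ← smul_left_cancel g (h₁.trans h₂.symm)]

theorem orbit_eq_pair_neg_of_stabilizer_le (hu : orbit G u = {u, -u})
    (hv : stabilizer G u ≤ stabilizer G v) (hfix : fixedPoints G A ⊆ {0}) :
    orbit G v = {v, -v} := by
  obtain ⟨g₀, hg₀⟩ : -u ∈ orbit G u := by simp [hu]
  have hdich := smul_eq_or_eq_smul_of_stabilizer_le hu.subset hg₀ hv
  have hg₀v : g₀ • v = -v :=
    eq_neg_of_add_eq_zero_right (hfix (add_smul_mem_fixedPoints hdich))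
  rw [hg₀v] at hdich
  ext w
  constructor
  · rintro ⟨g, rfl⟩
    exact hdich g
  · rintro (rfl | rfl)
    exacts [mem_orbit_self w, ⟨g₀, hg₀v⟩]

end MulAction

section Euclidean

variable {n : ℕ}

local notation "𝔼" => EuclideanSpace ℝ (Fin n)

theorem rotPart_eq_toRealLinearIsometryEquiv (γ : 𝔼 ≃ᵢ 𝔼) :
    rotPart γ = γ.toRealLinearIsometryEquiv := by
  ext1 v
  rw [rotPart, IsometryEquiv.toRealLinearIsometryEquiv_apply]

theorem apply_sub_apply_eq_rotPart (γ : 𝔼 ≃ᵢ 𝔼) (p q : 𝔼) : γ p - γ q = rotPart γ (p - q) := by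
  rw [rotPart_eq_toRealLinearIsometryEquiv, map_sub,
    IsometryEquiv.toRealLinearIsometryEquiv_apply, IsometryEquiv.toRealLinearIsometryEquiv_apply,
    sub_sub_sub_cancel_right]

theorem rotPart_mul (σ τ : 𝔼 ≃ᵢ 𝔼) (v : 𝔼) : rotPart (σ * τ) v = rotPart σ (rotPart τ v) :=
  apply_sub_apply_eq_rotPart σ (τ v) (τ 0)

def pointStabilizer (Γ : Subgroup (𝔼 ≃ᵢ 𝔼)) (x : 𝔼) : Subgroup (𝔼 ≃ᵢ 𝔼) where
  carrier := {γ | γ ∈ Γ ∧ γ x = x}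
  mul_mem' ha hb := ⟨Γ.mul_mem ha.1 hb.1, by rw [IsometryEquiv.mul_apply, hb.2, ha.2]⟩
  one_mem' := ⟨Γ.one_mem, rfl⟩
  inv_mem' {γ} hγ := ⟨Γ.inv_mem hγ.1, by nth_rw 1 [← hγ.2]; exact γ.inv_apply_self x⟩

/-- Since `γ (x + w) = x + rotPart γ w` for `γ ∈ Γ_x`, this is the action of `Γ_x` around `x`. -/
instance (Γ : Subgroup (𝔼 ≃ᵢ 𝔼)) (x : 𝔼) : DistribMulAction (pointStabilizer Γ x) 𝔼 where
  smul γ v := rotPart γ v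
  one_smul v := sub_zero v
  mul_smul σ τ v := rotPart_mul σ τ v
  smul_zero γ := sub_self _
  smul_add γ v w := by
    change rotPart γ (v + w) = rotPart γ v + rotPart γ w
    simp only [rotPart_eq_toRealLinearIsometryEquiv, map_add]

theorem rotSet_eq_orbit (Γ : Subgroup (𝔼 ≃ᵢ 𝔼)) (x v : 𝔼) :
    rotSet Γ x v = MulAction.orbit (pointStabilizer Γ x) v := by
  ext w
  constructor
  · rintro ⟨γ, hγ, hγx, rfl⟩
    exact ⟨⟨γ, hγ, hγx⟩, rfl⟩
  · rintro ⟨⟨γ, hγ, hγx⟩, rfl⟩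
    exact ⟨γ, hγ, hγx, rfl⟩

theorem eq_zero_of_forall_rotPart_eq_of_isolated {H : Subgroup (𝔼 ≃ᵢ 𝔼)} {x : 𝔼}
    (hx : x ∈ FixSet H) {ε : ℝ} (hε : 0 < ε) (hiso : FixSet H ∩ ball x ε = {x}) {u : 𝔼}
    (hu : ∀ h ∈ H, rotPart h u = u) : u = 0 := by
  set t := ε / (‖u‖ + 1)
  have ht : 0 < t := by positivity
  have hfix : x + t • u ∈ FixSet H := fun h hh => by
    have hdiff : h (x + t • u) - h x = t • u := by
      rw [apply_sub_apply_eq_rotPart, add_sub_cancel_left, rotPart_eq_toRealLinearIsometryEquiv,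
        map_smul, ← rotPart_eq_toRealLinearIsometryEquiv, hu h hh]
    rw [hx h hh] at hdiff
    exact sub_eq_iff_eq_add'.mp hdiff
  have hball : x + t • u ∈ ball x ε := by
    rw [mem_ball, dist_eq_norm, add_sub_cancel_left, norm_smul, Real.norm_of_nonneg ht.le,
      div_mul_eq_mul_div, div_lt_iff₀ (by positivity)]
    nlinarith [norm_nonneg u]
  have hxu : x + t • u = x := by
    rw [← Set.mem_singleton_iff, ← hiso]
    exact ⟨hfix, hball⟩
  exact (smul_eq_zero.mp (add_eq_left.mp hxu)).resolve_left ht.ne'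

theorem fixedPoints_pointStabilizer_subset_zero {Γ : Subgroup (𝔼 ≃ᵢ 𝔼)} {x : 𝔼}
    (hx : x ∈ SingSet Γ) : MulAction.fixedPoints (pointStabilizer Γ x) 𝔼 ⊆ {0} := by
  obtain ⟨H, hHΓ, hxH, ε, hε, hiso⟩ := hx
  intro u hu
  exact eq_zero_of_forall_rotPart_eq_of_isolated hxH hε hiso
    fun h hh => hu ⟨h, hHΓ hh, hxH h hh⟩

theorem apply_eq_of_rotPart_sub_eq {γ : 𝔼 ≃ᵢ 𝔼} {x y : 𝔼} (hy : γ y = y)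
    (h : rotPart γ (y - x) = y - x) : γ x = x := by
  rwa [← apply_sub_apply_eq_rotPart, hy, sub_right_inj] at h

end Euclidean

theorem sublemma_rot_orbit_pm_general {n : ℕ}
    (Γ : Subgroup (EuclideanSpace ℝ (Fin n) ≃ᵢ EuclideanSpace ℝ (Fin n)))
    (hrefl : ReflProp Γ)
    (X Y : EuclideanSpace ℝ (Fin n)) (hX : X ∈ SS Γ Y) (hY : Y ∈ SingSet Γ)
    (v : EuclideanSpace ℝ (Fin n))
    (hv : ∀ γ ∈ Γ, γ X = X → γ Y = Y → rotPart γ v = v) :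
    rotSet Γ Y v = {v, -v} := by
  rw [rotSet_eq_orbit]
  refine MulAction.orbit_eq_pair_neg_of_stabilizer_le (u := Y - X) ?_ ?_
    (fixedPoints_pointStabilizer_subset_zero hY)
  · rw [← rotSet_eq_orbit, hrefl Y hY X hX, neg_sub]
  · rintro ⟨γ, hγ, hγY⟩ hγu
    exact hv γ hγ (apply_eq_of_rotPart_sub_eq hγY hγu) hγY

theorem sublemma_rot_orbit_pm {n : ℕ} (hn : 1 ≤ n)
    (Γ : Subgroup (EuclideanSpace ℝ (Fin n) ≃ᵢ EuclideanSpace ℝ (Fin n)))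
    (hdisc : ProperlyDisc Γ) (hcc : CocompactAct Γ)
    (hne : (SingSet Γ).Nonempty) (hrefl : ReflProp Γ) (hmid : MidProp Γ)
    (X Y : EuclideanSpace ℝ (Fin n)) (hX : X ∈ SS Γ Y) (hY : Y ∈ SingSet Γ)
    (v : EuclideanSpace ℝ (Fin n))
    (hv : ∀ γ ∈ Γ, γ X = X → γ Y = Y → rotPart γ v = v) :
    rotSet Γ Y v = {v, -v} :=
  sublemma_rot_orbit_pm_general Γ hrefl X Y hX hY v hv
end
end

section
/- Let Γ be a discrete cocompact subgroup of isometries of ℝⁿ such that ℰ is nonempty and Γ has the reflection property and the midpoint property. Let X, Y, Z ∈ ℰ with Y, Z ∈ 𝔖(X), and suppose the angle ∠ Y X Z (at vertex X) is not equal to π/2. Then Γ_{X,Y} = Γ_{X,Z}. -/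
open Metric

noncomputable section

/- If `γ ∈ Γ_X` also fixes `Y`, the reflection property leaves two options for `γ Z`: `Z` itself
or its mirror image `2X - Z` through `X`. In the second case `Y` is equidistant from `Z` and its
mirror image, so it lies on the hyperplane through `X` orthogonal to `Z - X`, i.e.
`∠ Y X Z = π / 2`. Hence `Γ_{X,Y} ⊆ Γ_{X,Z}`, and the reverse inclusion holds by symmetry. -/

theorem EuclideanGeometry.angle_eq_pi_div_two_of_dist_pointReflection_eq {V P : Type*}
    [NormedAddCommGroup V] [InnerProductSpace ℝ V] [MetricSpace P] [NormedAddTorsor V P]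
    {p₁ p₂ p₃ : P} (h : dist p₁ (Equiv.pointReflection p₂ p₃) = dist p₁ p₃) :
    EuclideanGeometry.angle p₁ p₂ p₃ = Real.pi / 2 := by
  have hmid : midpoint ℝ (Equiv.pointReflection p₂ p₃) p₃ = p₂ := by
    rw [midpoint_eq_iff', Equiv.pointReflection_involutive]
  simpa only [hmid] using EuclideanGeometry.angle_right_midpoint_eq_pi_div_two_of_dist_eq h

lemma rotPart_sub {n : ℕ} (γ : EuclideanSpace ℝ (Fin n) ≃ᵢ EuclideanSpace ℝ (Fin n))
    (p q : EuclideanSpace ℝ (Fin n)) : rotPart γ (p - q) = γ p - γ q := by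
  simpa only [rotPart, IsometryEquiv.toRealLinearIsometryEquiv_apply, sub_sub_sub_cancel_right] using
    map_sub γ.toRealLinearIsometryEquiv p q

lemma ReflProp.apply_eq_or_eq_pointReflection {n : ℕ}
    {Γ : Subgroup (EuclideanSpace ℝ (Fin n) ≃ᵢ EuclideanSpace ℝ (Fin n))} (hrefl : ReflProp Γ)
    {X Z : EuclideanSpace ℝ (Fin n)} (hX : X ∈ SingSet Γ) (hZ : Z ∈ SS Γ X)
    {γ : EuclideanSpace ℝ (Fin n) ≃ᵢ EuclideanSpace ℝ (Fin n)} (hγ : γ ∈ Γ) (hγX : γ X = X) :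
    γ Z = Z ∨ γ Z = Equiv.pointReflection X Z := by
  have hrot : rotPart γ (X - Z) ∈ rotSet Γ X (X - Z) := ⟨γ, hγ, hγX, rfl⟩
  rw [hrefl X hX Z hZ, rotPart_sub, hγX] at hrot
  rcases hrot with h | h
  · exact .inl (sub_right_injective h)
  · refine .inr ?_
    rw [Set.mem_singleton_iff] at h
    rw [Equiv.pointReflection_apply, vsub_eq_sub, vadd_eq_add, ← neg_sub Z X, ← h]
    abel

lemma ReflProp.apply_eq_of_angle_ne_pi_div_two {n : ℕ}
    {Γ : Subgroup (EuclideanSpace ℝ (Fin n) ≃ᵢ EuclideanSpace ℝ (Fin n))} (hrefl : ReflProp Γ)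
    {X Y Z : EuclideanSpace ℝ (Fin n)} (hX : X ∈ SingSet Γ) (hZ : Z ∈ SS Γ X)
    (hangle : EuclideanGeometry.angle Y X Z ≠ Real.pi / 2)
    {γ : EuclideanSpace ℝ (Fin n) ≃ᵢ EuclideanSpace ℝ (Fin n)} (hγ : γ ∈ Γ) (hγX : γ X = X)
    (hγY : γ Y = Y) : γ Z = Z := by
  refine (hrefl.apply_eq_or_eq_pointReflection hX hZ hγ hγX).resolve_right fun hγZ => hangle ?_
  apply EuclideanGeometry.angle_eq_pi_div_two_of_dist_pointReflection_eq
  rw [← hγZ, ← γ.dist_eq Y Z, hγY]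

theorem angle_ne_pi_div_two_stabilizers_eq_general {n : ℕ}
    (Γ : Subgroup (EuclideanSpace ℝ (Fin n) ≃ᵢ EuclideanSpace ℝ (Fin n)))
    (hrefl : ReflProp Γ)
    (X Y Z : EuclideanSpace ℝ (Fin n)) (hX : X ∈ SingSet Γ)
    (hY : Y ∈ SS Γ X) (hZ : Z ∈ SS Γ X)
    (hangle : EuclideanGeometry.angle Y X Z ≠ Real.pi / 2) :
    {γ : EuclideanSpace ℝ (Fin n) ≃ᵢ EuclideanSpace ℝ (Fin n) |
        γ ∈ Γ ∧ γ X = X ∧ γ Y = Y} =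
      {γ : EuclideanSpace ℝ (Fin n) ≃ᵢ EuclideanSpace ℝ (Fin n) |
        γ ∈ Γ ∧ γ X = X ∧ γ Z = Z} := by
  have hangle' : EuclideanGeometry.angle Z X Y ≠ Real.pi / 2 := by
    rwa [EuclideanGeometry.angle_comm]
  ext γ
  constructor
  · rintro ⟨hγ, hγX, hγY⟩
    exact ⟨hγ, hγX, hrefl.apply_eq_of_angle_ne_pi_div_two hX hZ hangle hγ hγX hγY⟩
  · rintro ⟨hγ, hγX, hγZ⟩
    exact ⟨hγ, hγX, hrefl.apply_eq_of_angle_ne_pi_div_two hX hY hangle' hγ hγX hγZ⟩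

theorem angle_ne_pi_div_two_stabilizers_eq {n : ℕ} (hn : 1 ≤ n)
    (Γ : Subgroup (EuclideanSpace ℝ (Fin n) ≃ᵢ EuclideanSpace ℝ (Fin n)))
    (hdisc : ProperlyDisc Γ) (hcc : CocompactAct Γ)
    (hne : (SingSet Γ).Nonempty) (hrefl : ReflProp Γ) (hmid : MidProp Γ)
    (X Y Z : EuclideanSpace ℝ (Fin n)) (hX : X ∈ SingSet Γ)
    (hY : Y ∈ SS Γ X) (hZ : Z ∈ SS Γ X)
    (hangle : EuclideanGeometry.angle Y X Z ≠ Real.pi / 2) :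
    {γ : EuclideanSpace ℝ (Fin n) ≃ᵢ EuclideanSpace ℝ (Fin n) |
        γ ∈ Γ ∧ γ X = X ∧ γ Y = Y} =
      {γ : EuclideanSpace ℝ (Fin n) ≃ᵢ EuclideanSpace ℝ (Fin n) |
        γ ∈ Γ ∧ γ X = X ∧ γ Z = Z} :=
  angle_ne_pi_div_two_stabilizers_eq_general Γ hrefl X Y Z hX hY hZ hangle
end
end

section
/- Let Γ be a discrete cocompact subgroup of isometries of ℝⁿ such that ℰ is nonempty. Then for every X ∈ ℰ the set 𝔖(X) contains at least n points X_1, …, X_n such that the vectors X_1 − X, …, X_n − X are linearly independent. -/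
open Metric

noncomputable section

/-!
Fixed-point sets of isometries are affine, so a point of `ℰ` is the unique fixed point of some
subgroup of `Γ`. Hence `ℰ` is `Γ`-invariant and locally finite (distinct points of `ℰ ∩ K` are
fixed by distinct subgroups, all contained in the finite set of elements moving `K` into
itself), and by cocompactness it is relatively dense. So the Voronoi cell `V_X` is bounded and
cut out by the finitely many bisector half-spaces of the points of `ℰ` near `X`. In an
irredundant such family every half-space supports a facet of `V_X`, so its points lie in
`𝔖(X)`. If the vectors `Y - X`, `Y ∈ 𝔖(X)`, did not span `ℝⁿ`, a nonzero vector orthogonal to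
all of them would span a line through `X` inside the bounded cell `V_X`.
-/

open scoped RealInnerProductSpace Topology

theorem exists_lineMap_mem_ball {V P : Type*} [NormedAddCommGroup V] [NormedSpace ℝ V]
    [MetricSpace P] [NormedAddTorsor V P] (x y : P) {ε : ℝ} (hε : 0 < ε) :
    ∃ t : ℝ, 0 < t ∧ t < 1 ∧ AffineMap.lineMap x y t ∈ ball x ε := by
  have hnear : ∀ᶠ t in 𝓝[>] (0 : ℝ), t < 1 ∧ AffineMap.lineMap x y t ∈ ball x ε := by
    refine (Filter.eventually_of_mem (Ioo_mem_nhdsGT one_pos) fun t ht => ht.2).and ?_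
    have hcont : Continuous fun t : ℝ => AffineMap.lineMap x y t := by fun_prop
    exact nhdsWithin_le_nhds <| hcont.continuousAt.preimage_mem_nhds <| by
      simpa using ball_mem_nhds x hε
  obtain ⟨t, ⟨ht1, htball⟩, ht0⟩ := (hnear.and self_mem_nhdsWithin).exists
  exact ⟨t, ht0, ht1, htball⟩

theorem AffineSubspace.affineSpan_eq_of_inter_ball_subset {V P : Type*} [NormedAddCommGroup V]
    [NormedSpace ℝ V] [MetricSpace P] [NormedAddTorsor V P] {A : AffineSubspace ℝ P}
    {s : Set P} {v : P} {δ : ℝ} (hsA : s ⊆ A) (hv : v ∈ A) (hδ : 0 < δ)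
    (hball : (A : Set P) ∩ ball v δ ⊆ s) : affineSpan ℝ s = A := by
  refine le_antisymm (affineSpan_le.mpr hsA) fun p hp => ?_
  obtain ⟨t, ht0, -, htball⟩ := exists_lineMap_mem_ball v p hδ
  have hvs : v ∈ affineSpan ℝ s := subset_affineSpan ℝ s (hball ⟨hv, mem_ball_self hδ⟩)
  have hq : AffineMap.lineMap v p t ∈ affineSpan ℝ s :=
    subset_affineSpan ℝ s (hball ⟨AffineMap.lineMap_mem t hv hp, htball⟩)
  have hdir : t • (p -ᵥ v) ∈ (affineSpan ℝ s).direction := by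
    rw [← AffineMap.lineMap_vsub_left]
    exact AffineSubspace.vsub_mem_direction hq hvs
  have hdir' : p -ᵥ v ∈ (affineSpan ℝ s).direction := by
    simpa [ht0.ne'] using Submodule.smul_mem _ t⁻¹ hdir
  simpa using AffineSubspace.vadd_mem_of_mem_direction hdir' hvs

theorem Convex.eq_singleton_of_inter_ball_eq {E : Type*} [NormedAddCommGroup E]
    [NormedSpace ℝ E] {s : Set E} {x : E} {ε : ℝ} (hs : Convex ℝ s) (hε : 0 < ε)
    (h : s ∩ ball x ε = {x}) : s = {x} := by
  have hx : x ∈ s := (h.symm ▸ Set.mem_singleton x : x ∈ s ∩ ball x ε).1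
  refine Set.eq_singleton_iff_unique_mem.mpr ⟨hx, fun b hb => ?_⟩
  obtain ⟨t, ht0, ht1, htball⟩ := exists_lineMap_mem_ball x b hε
  have hseg := h.subset ⟨hs.lineMap_mem hx hb ⟨ht0.le, ht1.le⟩, htball⟩
  rw [Set.mem_singleton_iff, AffineMap.lineMap_eq_left_iff] at hseg
  exact (hseg.resolve_right ht0.ne').symm

theorem Convex.subset_closedBall_of_inter_closedBall_subset {E : Type*} [NormedAddCommGroup E]
    [NormedSpace ℝ E] {s : Set E} {x : E} {r r' : ℝ} (hs : Convex ℝ s) (hx : x ∈ s)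
    (hr : 0 ≤ r) (hrr' : r < r') (h : s ∩ closedBall x r' ⊆ closedBall x r) :
    s ⊆ closedBall x r := by
  intro z hz
  by_contra hzr
  have hzr' : r' < dist z x := lt_of_not_ge fun hzr' => hzr (h ⟨hz, hzr'⟩)
  have hpos : 0 < dist z x := by linarith
  have ht : 0 ≤ r' / dist z x := div_nonneg (by linarith) hpos.le
  have hdist : dist (AffineMap.lineMap x z (r' / dist z x)) x = r' := by
    rw [dist_lineMap_left, Real.norm_of_nonneg ht, dist_comm x z, div_mul_cancel₀ _ hpos.ne']
  have hw := h ⟨hs.lineMap_mem hx hz ⟨ht, ((div_lt_one hpos).mpr hzr').le⟩, hdist.le⟩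
  rw [mem_closedBall, hdist] at hw
  linarith

theorem exists_linearIndependent_comp_of_span_image_eq_top {K V α : Type*} [DivisionRing K]
    [AddCommGroup V] [Module K V] [FiniteDimensional K V] {m : ℕ} (hm : Module.finrank K V = m)
    {f : α → V} {s : Set α} (hs : Submodule.span K (f '' s) = ⊤) :
    ∃ g : Fin m → α, (∀ i, g i ∈ s) ∧ LinearIndependent K (f ∘ g) := by
  subst hm
  set b := Module.Basis.ofSpan hs.ge
  have hb : ∀ i, ∃ a ∈ s, f a = b i := fun i => Module.Basis.ofSpan_subset hs.ge ⟨i, rfl⟩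
  choose g hgs hgb using hb
  set e := b.indexEquiv (Module.finBasis K V)
  refine ⟨g ∘ e.symm, fun i => hgs _, ?_⟩
  have : f ∘ g = b := funext hgb
  rw [← Function.comp_assoc, this]
  exact b.linearIndependent.comp _ e.symm.injective

section Voronoi

variable {n : ℕ} {E C : Set (EuclideanSpace ℝ (Fin n))} {x y z w : EuclideanSpace ℝ (Fin n)}

def voronoiNeighbors (E : Set (EuclideanSpace ℝ (Fin n))) (x : EuclideanSpace ℝ (Fin n)) :
    Set (EuclideanSpace ℝ (Fin n)) :=
  {y | y ∈ E ∧ y ≠ x ∧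
    Module.finrank ℝ (affineSpan ℝ (Vor E x ∩ Vor E y)).direction = n - 1}

theorem dist_sq_sub_dist_sq :
    dist z x ^ 2 - dist z y ^ 2 = 2 * ⟪y - x, z⟫ - (‖y‖ ^ 2 - ‖x‖ ^ 2) := by
  rw [dist_eq_norm, dist_eq_norm, norm_sub_sq_real, norm_sub_sq_real, inner_sub_left,
    real_inner_comm x, real_inner_comm y]
  ring

theorem dist_le_dist_iff_inner_le :
    dist z x ≤ dist z y ↔ ⟪y - x, z⟫ ≤ (‖y‖ ^ 2 - ‖x‖ ^ 2) / 2 := by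
  rw [← pow_le_pow_iff_left₀ dist_nonneg dist_nonneg two_ne_zero, ← sub_nonpos,
    dist_sq_sub_dist_sq]
  constructor <;> intro h <;> linarith

theorem dist_lt_dist_iff_inner_lt :
    dist z x < dist z y ↔ ⟪y - x, z⟫ < (‖y‖ ^ 2 - ‖x‖ ^ 2) / 2 := by
  rw [← pow_lt_pow_iff_left₀ dist_nonneg dist_nonneg two_ne_zero, ← sub_neg,
    dist_sq_sub_dist_sq]
  constructor <;> intro h <;> linarith

theorem self_mem_Vor : x ∈ Vor E x := fun _ _ => by simp

theorem Vor_subset_Vor (h : C ⊆ E) : Vor E x ⊆ Vor C x := fun _ hz y hy => hz y (h hy)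

theorem convex_Vor : Convex ℝ (Vor E x) := by
  have : Vor E x = ⋂ y ∈ E, {z | ⟪y - x, z⟫ ≤ (‖y‖ ^ 2 - ‖x‖ ^ 2) / 2} := by
    ext z; simp [Vor, dist_le_dist_iff_inner_le]
  rw [this]
  exact convex_iInter₂ fun y _ => convex_halfSpace_le (innerₛₗ ℝ (y - x)).isLinear _

theorem Vor_inter_Vor_eq_inter_perpBisector (hx : x ∈ E) (hy : y ∈ E) :
    Vor E x ∩ Vor E y = Vor E x ∩ AffineSubspace.perpBisector x y := by
  ext z
  simp only [Set.mem_inter_iff, SetLike.mem_coe, AffineSubspace.mem_perpBisector_iff_dist_eq]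
  refine ⟨fun ⟨hzx, hzy⟩ => ⟨hzx, le_antisymm (hzx y hy) (hzy x hx)⟩,
    fun ⟨hzx, hxy⟩ => ⟨hzx, fun e he => hxy ▸ hzx e he⟩⟩

theorem Vor_subset_closedBall {R : ℝ} (hR : ∀ z, ∃ e ∈ E, dist z e ≤ R) :
    Vor E x ⊆ closedBall x R := fun z hz => by
  obtain ⟨e, he, hze⟩ := hR z
  exact (hz e he).trans hze

theorem Vor_inter_closedBall_subset {r : ℝ} (hC : E ∩ closedBall x (2 * r) ⊆ C) :
    Vor C x ∩ closedBall x r ⊆ Vor E x := by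
  rintro z ⟨hzC, hzr⟩ e he
  by_cases hex : dist e x ≤ 2 * r
  · exact hzC e (hC ⟨he, hex⟩)
  · rw [mem_closedBall] at hzr
    linarith [dist_triangle_left e x z]

theorem exists_finset_Vor_eq {R : ℝ} (hfin : ∀ r, (E ∩ closedBall x r).Finite)
    (hR : ∀ z, ∃ e ∈ E, dist z e ≤ R) : ∃ C : Finset (EuclideanSpace ℝ (Fin n)),
      ↑C ⊆ E ∧ Vor ↑C x = Vor E x := by
  have hVR : Vor E x ⊆ closedBall x R := Vor_subset_closedBall hR
  have hR0 : 0 ≤ R := by simpa using hVR self_mem_Vor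
  set C := (hfin (2 * (R + 1))).toFinset
  have hCE : E ∩ closedBall x (2 * (R + 1)) ⊆ ↑C := by simp [C]
  have hCR : Vor ↑C x ⊆ closedBall x R :=
    convex_Vor.subset_closedBall_of_inter_closedBall_subset self_mem_Vor hR0 (lt_add_one R)
      ((Vor_inter_closedBall_subset hCE).trans hVR)
  refine ⟨C, by simp [C], subset_antisymm (fun z hz => ?_) (Vor_subset_Vor (by simp [C]))⟩
  exact Vor_inter_closedBall_subset hCE ⟨hz, closedBall_subset_closedBall (by linarith) (hCR hz)⟩

theorem exists_finset_Vor_eq_forall_exists_dist_lt {R : ℝ}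
    (hfin : ∀ r, (E ∩ closedBall x r).Finite) (hR : ∀ z, ∃ e ∈ E, dist z e ≤ R) :
    ∃ D : Finset (EuclideanSpace ℝ (Fin n)), ↑D ⊆ E ∧ Vor ↑D x = Vor E x ∧
      ∀ y ∈ D, ∃ w ∈ Vor ↑(D.erase y) x, dist w y < dist w x := by
  obtain ⟨C, hCE, hC⟩ := exists_finset_Vor_eq hfin hR
  obtain ⟨D, -, hD⟩ := exists_minimal_le_of_wellFoundedLT
    (fun D : Finset _ => ↑D ⊆ E ∧ Vor ↑D x = Vor E x) C ⟨hCE, hC⟩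
  refine ⟨D, hD.prop.1, hD.prop.2, fun y hy => ?_⟩
  have hne : Vor ↑D x ≠ Vor ↑(D.erase y) x := fun h =>
    hD.not_prop_of_lt (Finset.erase_ssubset hy)
      ⟨(Finset.coe_subset.mpr (D.erase_subset y)).trans hD.prop.1, h ▸ hD.prop.2⟩
  obtain ⟨w, hw, hwD⟩ := Set.exists_of_ssubset
    ((Vor_subset_Vor (Finset.coe_subset.mpr (D.erase_subset y))).ssubset_of_ne hne)
  simp only [Vor, Set.mem_ofPred_eq, not_forall, not_le] at hwD
  obtain ⟨y', hy', hwy'⟩ := hwD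
  obtain rfl : y' = y := by_contra fun hy'y => (hw y' (by simp [hy'y, hy'])).not_gt hwy'
  exact ⟨w, hw, hwy'⟩

theorem dist_lineMap_lt_dist (hxy : x ≠ y) (hw : dist w x ≤ dist w y) {t : ℝ} (ht0 : 0 ≤ t)
    (ht1 : t < 1) : dist (AffineMap.lineMap x w t) x < dist (AffineMap.lineMap x w t) y := by
  have hx := dist_lt_dist_iff_inner_lt.mp (by simpa using dist_pos.mpr hxy : dist x x < dist x y)
  rw [dist_le_dist_iff_inner_le] at hw
  rw [dist_lt_dist_iff_inner_lt, AffineMap.lineMap_apply_module, inner_add_right,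
    real_inner_smul_right, real_inner_smul_right]
  nlinarith

theorem finrank_direction_perpBisector (hxy : x ≠ y) :
    Module.finrank ℝ (AffineSubspace.perpBisector x y).direction = n - 1 := by
  have := (ℝ ∙ (y -ᵥ x)).finrank_add_finrank_orthogonal
  rw [finrank_span_singleton (vsub_ne_zero.mpr hxy.symm), finrank_euclideanSpace_fin] at this
  rw [AffineSubspace.direction_perpBisector]
  omega

theorem affineSpan_Vor_inter_perpBisector_eq {D : Finset (EuclideanSpace ℝ (Fin n))}
    (hxD : x ∉ D) (hw : w ∈ Vor ↑(D.erase y) x) (hwy : dist w y < dist w x) :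
    affineSpan ℝ (Vor ↑D x ∩ AffineSubspace.perpBisector x y) =
      AffineSubspace.perpBisector x y := by
  obtain ⟨t, ⟨ht0, ht1⟩, hvB⟩ : ∃ t ∈ Set.Ico (0 : ℝ) 1,
      AffineMap.lineMap x w t ∈ AffineSubspace.perpBisector x y := by
    set f := fun t : ℝ => dist (AffineMap.lineMap x w t) x - dist (AffineMap.lineMap x w t) y
    have hf0 : f 0 ≤ 0 := by simp [f]
    have hf1 : 0 < f 1 := by simpa [f, dist_comm x w] using hwy
    obtain ⟨t, ht, hft⟩ :=
      intermediate_value_Icc zero_le_one (by fun_prop : Continuous f).continuousOn ⟨hf0, hf1.le⟩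
    refine ⟨t, ⟨ht.1, lt_of_le_of_ne ht.2 fun h => hf1.ne' (h ▸ hft)⟩, ?_⟩
    rw [AffineSubspace.mem_perpBisector_iff_dist_eq]
    exact sub_eq_zero.mp hft
  set U := ⋂ y' ∈ D.erase y, {z | dist z x < dist z y'}
  have hU : IsOpen U := isOpen_biInter_finset fun y' _ => isOpen_lt (by fun_prop) (by fun_prop)
  have hvU : AffineMap.lineMap x w t ∈ U := Set.mem_iInter₂.mpr fun y' hy' =>
    dist_lineMap_lt_dist (ne_of_mem_of_not_mem (Finset.mem_of_mem_erase hy') hxD).symm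
      (hw y' hy') ht0 ht1
  obtain ⟨δ, hδ, hball⟩ := Metric.isOpen_iff.mp hU _ hvU
  refine AffineSubspace.affineSpan_eq_of_inter_ball_subset Set.inter_subset_right hvB hδ ?_
  rintro z ⟨hzB, hzv⟩
  refine ⟨fun y' hy' => ?_, hzB⟩
  rcases eq_or_ne y' y with rfl | hy'y
  · exact (AffineSubspace.mem_perpBisector_iff_dist_eq.mp hzB).le
  · exact (Set.mem_iInter₂.mp (hball hzv) y' (Finset.mem_erase.mpr ⟨hy'y, hy'⟩)).le

theorem add_smul_mem_Vor {u : EuclideanSpace ℝ (Fin n)} (hu : ∀ y ∈ E, ⟪y - x, u⟫ = 0)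
    (t : ℝ) : x + t • u ∈ Vor E x := by
  intro y hy
  rw [dist_le_dist_iff_inner_le, inner_add_right, real_inner_smul_right, hu y hy, mul_zero,
    add_zero, ← dist_le_dist_iff_inner_le, dist_self]
  exact dist_nonneg

theorem span_image_sub_voronoiNeighbors_eq_top {R : ℝ}
    (hfin : ∀ r, (E ∩ closedBall x r).Finite) (hR : ∀ z, ∃ e ∈ E, dist z e ≤ R) (hx : x ∈ E) :
    Submodule.span ℝ ((· - x) '' voronoiNeighbors E x) = ⊤ := by
  obtain ⟨D, hDE, hDx, hess⟩ := exists_finset_Vor_eq_forall_exists_dist_lt hfin hR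
  have hxD : x ∉ D := fun h => by
    obtain ⟨w, -, hw⟩ := hess x h
    exact lt_irrefl _ hw
  have hnbr : ∀ y ∈ D, y ∈ voronoiNeighbors E x := fun y hy => by
    obtain ⟨w, hw, hwy⟩ := hess y hy
    have hyx : y ≠ x := ne_of_mem_of_not_mem hy hxD
    refine ⟨hDE hy, hyx, ?_⟩
    rw [Vor_inter_Vor_eq_inter_perpBisector hx (hDE hy), ← hDx,
      affineSpan_Vor_inter_perpBisector_eq hxD hw hwy, finrank_direction_perpBisector hyx.symm]
  -- otherwise a nonzero `u` orthogonal to all `y - x` gives a line through `x` inside `Vor E x`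
  by_contra htop
  obtain ⟨u, hu, hu0⟩ := (Submodule.ne_bot_iff _).mp
    (mt Submodule.orthogonal_eq_bot_iff.mp htop)
  have hline : ∀ t : ℝ, x + t • u ∈ Vor E x := fun t => by
    rw [← hDx]
    exact add_smul_mem_Vor (fun y hy => Submodule.inner_right_of_mem_orthogonal
      (Submodule.subset_span (Set.mem_image_of_mem (· - x) (hnbr y hy))) hu) t
  have hdist : dist (x + ((|R| + 1) / ‖u‖) • u) x = |R| + 1 := by
    rw [dist_eq_norm, add_sub_cancel_left, norm_smul, Real.norm_of_nonneg (by positivity),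
      div_mul_cancel₀ _ (norm_ne_zero_iff.mpr hu0)]
  have hfar := Vor_subset_closedBall hR (hline ((|R| + 1) / ‖u‖))
  rw [mem_closedBall, hdist] at hfar
  linarith [le_abs_self R]

end Voronoi

section Crystallographic

variable {n : ℕ} {Γ : Subgroup (EuclideanSpace ℝ (Fin n) ≃ᵢ EuclideanSpace ℝ (Fin n))}

theorem convex_fixSet (H : Subgroup (EuclideanSpace ℝ (Fin n) ≃ᵢ EuclideanSpace ℝ (Fin n))) :
    Convex ℝ (FixSet H) := by
  intro x hx y hy a b _ _ hab h hh
  have := Convex.combo_affine_apply (x := x) (y := y)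
    (f := h.toRealAffineIsometryEquiv.toAffineEquiv.toAffineMap) hab
  simp only [AffineEquiv.coe_toAffineMap, AffineIsometryEquiv.coe_toAffineEquiv,
    IsometryEquiv.coeFn_toRealAffineIsometryEquiv] at this
  rw [this, hx h hh, hy h hh]

theorem mem_singSet_iff {x : EuclideanSpace ℝ (Fin n)} :
    x ∈ SingSet Γ ↔ ∃ H ≤ Γ, FixSet H = {x} := by
  constructor
  · rintro ⟨H, hHΓ, -, ε, hε, hball⟩
    exact ⟨H, hHΓ, (convex_fixSet H).eq_singleton_of_inter_ball_eq hε hball⟩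
  · rintro ⟨H, hHΓ, hfix⟩
    exact ⟨H, hHΓ, hfix ▸ rfl, 1, one_pos, by rw [hfix]; simp⟩

theorem fixSet_map_conj (H : Subgroup (EuclideanSpace ℝ (Fin n) ≃ᵢ EuclideanSpace ℝ (Fin n)))
    (γ : EuclideanSpace ℝ (Fin n) ≃ᵢ EuclideanSpace ℝ (Fin n)) :
    FixSet (H.map (MulAut.conj γ).toMonoidHom) = γ '' FixSet H := by
  ext z
  simp only [FixSet, Subgroup.mem_map, forall_exists_index, and_imp, forall_apply_eq_imp_iff₂,
    Set.mem_ofPred_eq, Set.mem_image, MulEquiv.coe_toMonoidHom, MulAut.conj_apply]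
  constructor
  · intro hz
    refine ⟨γ.symm z, fun h hh => γ.injective ?_, γ.apply_symm_apply z⟩
    rw [γ.apply_symm_apply]; exact hz h hh
  · rintro ⟨w, hw, rfl⟩ h hh
    simp [hw h hh]

theorem apply_mem_singSet {γ : EuclideanSpace ℝ (Fin n) ≃ᵢ EuclideanSpace ℝ (Fin n)}
    (hγ : γ ∈ Γ) {x : EuclideanSpace ℝ (Fin n)} (hx : x ∈ SingSet Γ) : γ x ∈ SingSet Γ := by
  obtain ⟨H, hHΓ, hfix⟩ := mem_singSet_iff.mp hx
  refine mem_singSet_iff.mpr ⟨H.map (MulAut.conj γ).toMonoidHom, ?_, ?_⟩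
  · rintro _ ⟨h, hh, rfl⟩
    exact Γ.mul_mem (Γ.mul_mem hγ (hHΓ hh)) (Γ.inv_mem hγ)
  · rw [fixSet_map_conj, hfix, Set.image_singleton]

theorem ProperlyDisc.finite_singSet_inter (hdisc : ProperlyDisc Γ)
    {K : Set (EuclideanSpace ℝ (Fin n))} (hK : IsCompact K) :
    (SingSet Γ ∩ K).Finite := by
  choose! H hHΓ hfix using fun x (hx : x ∈ SingSet Γ ∩ K) => mem_singSet_iff.mp hx.1
  have hmaps : Set.MapsTo (SetLike.coe ∘ H) (SingSet Γ ∩ K)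
      (Set.powerset {γ | γ ∈ Γ ∧ ((γ '' K) ∩ K).Nonempty}) := by
    intro x hx h hh
    have hxfix : h x = x := (hfix x hx ▸ Set.mem_singleton x : x ∈ FixSet (H x)) h hh
    exact ⟨hHΓ x hx hh, x, ⟨x, hx.2, hxfix⟩, hx.2⟩
  have hinj : Set.InjOn (SetLike.coe ∘ H) (SingSet Γ ∩ K) := by
    intro x hx y hy hxy
    have := hfix x hx
    rwa [SetLike.coe_injective hxy, hfix y hy, Set.singleton_eq_singleton_iff, eq_comm] at this
  exact Set.Finite.of_finite_image
    ((hdisc K hK).finite_subsets.subset (Set.image_subset_iff.mpr hmaps)) hinj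

theorem CocompactAct.exists_dist_le (hcc : CocompactAct Γ) {X : EuclideanSpace ℝ (Fin n)}
    (hX : X ∈ SingSet Γ) :
    ∃ R, ∀ z, ∃ e ∈ SingSet Γ, dist z e ≤ R := by
  obtain ⟨K, hK, hcover⟩ := hcc
  have hmem : ∀ z, ∃ γ ∈ Γ, ∃ k ∈ K, γ k = z := fun z => by
    have hz : z ∈ ⋃ γ ∈ Γ, γ '' K := hcover ▸ Set.mem_univ z
    simpa using hz
  obtain ⟨γ₀, hγ₀, k₀, hk₀, rfl⟩ := hmem X
  refine ⟨diam K, fun z => ?_⟩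
  obtain ⟨γ, hγ, k, hk, rfl⟩ := hmem z
  refine ⟨γ k₀, ?_, ?_⟩
  · simpa using apply_mem_singSet (Γ.mul_mem hγ (Γ.inv_mem hγ₀)) hX
  · rw [γ.dist_eq]
    exact dist_le_diam_of_mem hK.isBounded hk hk₀

theorem SS_eq_voronoiNeighbors (x : EuclideanSpace ℝ (Fin n)) :
    SS Γ x = voronoiNeighbors (SingSet Γ) x :=
  rfl

end Crystallographic

theorem SS_contains_n_independent_general {n : ℕ}
    (Γ : Subgroup (EuclideanSpace ℝ (Fin n) ≃ᵢ EuclideanSpace ℝ (Fin n)))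
    (hdisc : ProperlyDisc Γ) (hcc : CocompactAct Γ)
    (X : EuclideanSpace ℝ (Fin n)) (hX : X ∈ SingSet Γ) :
    ∃ Xs : Fin n → EuclideanSpace ℝ (Fin n),
      (∀ i, Xs i ∈ SS Γ X) ∧ LinearIndependent ℝ (fun i => Xs i - X) := by
  obtain ⟨R, hR⟩ := hcc.exists_dist_le hX
  have hspan := span_image_sub_voronoiNeighbors_eq_top
    (fun r => hdisc.finite_singSet_inter (isCompact_closedBall X r)) hR hX
  rw [← SS_eq_voronoiNeighbors] at hspan
  obtain ⟨Xs, hXs, hli⟩ :=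
    exists_linearIndependent_comp_of_span_image_eq_top finrank_euclideanSpace_fin hspan
  exact ⟨Xs, hXs, hli⟩

theorem SS_contains_n_independent {n : ℕ} (hn : 1 ≤ n)
    (Γ : Subgroup (EuclideanSpace ℝ (Fin n) ≃ᵢ EuclideanSpace ℝ (Fin n)))
    (hdisc : ProperlyDisc Γ) (hcc : CocompactAct Γ)
    (hne : (SingSet Γ).Nonempty)
    (X : EuclideanSpace ℝ (Fin n)) (hX : X ∈ SingSet Γ) :
    ∃ Xs : Fin n → EuclideanSpace ℝ (Fin n),
      (∀ i, Xs i ∈ SS Γ X) ∧ LinearIndependent ℝ (fun i => Xs i - X) :=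
  SS_contains_n_independent_general Γ hdisc hcc X hX
end
end

section
/- Let Ω ⊆ ℝⁿ be an open set and let f : Ω → ℝⁿ be a 1-Lipschitz map (‖f(u) − f(v)‖ ≤ ‖u − v‖ for all u, v ∈ Ω) which is volume preserving: for every Borel set A ⊆ Ω, the Lebesgue measure of the image f(A) equals the Lebesgue measure of A. Then f is locally distance preserving: for every x ∈ Ω there is ε > 0 such that ‖f(u) − f(v)‖ = ‖u − v‖ for all u, v in the open ball B(x, ε). -/
/-! If `f` shrank the distance between two points `u`, `v` of `Ω`, take the disjoint balls of
radius `r = ‖u - v‖ / 2` around them. Their union has measure `2 μ(B_r)`, and so does its image,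
yet the image lies in the union of the two balls of radius `r` around `f u` and `f v`, which
overlap in an open set and hence have union of measure strictly less than `2 μ(B_r)`. -/

open Metric MeasureTheory Set

theorem MeasureTheory.measure_union_lt_add_of_measure_inter_pos {α : Type*} [MeasurableSpace α]
    {μ : Measure α} {s t : Set α} (ht : MeasurableSet t) (hs_fin : μ s ≠ ⊤) (ht_fin : μ t ≠ ⊤)
    (h : 0 < μ (s ∩ t)) : μ (s ∪ t) < μ s + μ t := by
  rw [← measure_union_add_inter s ht]
  exact ENNReal.lt_add_right (measure_union_ne_top hs_fin ht_fin) h.ne'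

theorem LipschitzOnWith.mapsTo_ball_of_ball_subset {α β : Type*} [PseudoMetricSpace α]
    [PseudoMetricSpace β] {f : α → β} {s : Set α} (hf : LipschitzOnWith 1 f s) {x : α} {r : ℝ}
    (hx : x ∈ s) (hr : ball x r ⊆ s) : MapsTo f (ball x r) (ball (f x) r) := fun y hy =>
  calc dist (f y) (f x) ≤ 1 * dist y x := hf.dist_le_mul y (hr hy) x hx
    _ < r := by simpa using hy

section AddHaar

variable {E : Type*} [NormedAddCommGroup E] [NormedSpace ℝ E] [MeasurableSpace E]
  [BorelSpace E] [ProperSpace E] {μ : Measure E} [μ.IsAddHaarMeasure]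

theorem MeasureTheory.Measure.addHaar_ball_union_ball_lt {a b : E} {r : ℝ}
    (h : dist a b < 2 * r) : μ (ball a r ∪ ball b r) < μ (ball a r) + μ (ball b r) := by
  have hmid : midpoint ℝ a b ∈ ball a r ∩ ball b r := by
    simp only [mem_inter_iff, mem_ball, dist_midpoint_left, dist_midpoint_right, Real.norm_ofNat]
    constructor <;> linarith
  exact measure_union_lt_add_of_measure_inter_pos measurableSet_ball measure_ball_lt_top.ne
    measure_ball_lt_top.ne ((isOpen_ball.inter isOpen_ball).measure_pos μ ⟨_, hmid⟩)

theorem dist_le_dist_of_lipschitzOnWith_one_of_measure_image_eq {s : Set E} {f : E → E}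
    (hf : LipschitzOnWith 1 f s) (hvol : ∀ A ⊆ s, MeasurableSet A → μ (f '' A) = μ A)
    {u v : E} (hu : ball u (dist u v / 2) ⊆ s) (hv : ball v (dist u v / 2) ⊆ s) :
    dist u v ≤ dist (f u) (f v) := by
  by_contra! hlt
  set r := dist u v / 2 with hr_def
  have hr : 0 < r := half_pos (dist_nonneg.trans_lt hlt)
  have huv : Disjoint (ball u r) (ball v r) := ball_disjoint_ball (by linarith [hr_def])
  have himage : f '' (ball u r ∪ ball v r) ⊆ ball (f u) r ∪ ball (f v) r := by
    rw [image_union]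
    exact union_subset_union
      (hf.mapsTo_ball_of_ball_subset (hu (mem_ball_self hr)) hu).image_subset
      (hf.mapsTo_ball_of_ball_subset (hv (mem_ball_self hr)) hv).image_subset
  have hfar : dist (f u) (f v) < 2 * r := by linarith [hr_def]
  refine lt_irrefl (μ (ball u r) + μ (ball v r)) ?_
  calc μ (ball u r) + μ (ball v r) = μ (f '' (ball u r ∪ ball v r)) := by
        rw [hvol _ (union_subset hu hv) (measurableSet_ball.union measurableSet_ball),
          measure_union huv measurableSet_ball]
    _ ≤ μ (ball (f u) r ∪ ball (f v) r) := measure_mono himage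
    _ < μ (ball (f u) r) + μ (ball (f v) r) := μ.addHaar_ball_union_ball_lt hfar
    _ = μ (ball u r) + μ (ball v r) := by
        rw [μ.addHaar_ball_center (f u), μ.addHaar_ball_center (f v), μ.addHaar_ball_center u,
          μ.addHaar_ball_center v]

end AddHaar

theorem lipschitz_volume_preserving_is_local_isometry (n : ℕ)
    (Ω : Set (EuclideanSpace ℝ (Fin n))) (hΩ : IsOpen Ω)
    (f : EuclideanSpace ℝ (Fin n) → EuclideanSpace ℝ (Fin n))
    (hlip : ∀ u ∈ Ω, ∀ v ∈ Ω, ‖f u - f v‖ ≤ ‖u - v‖)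
    (hvol : ∀ A ⊆ Ω, MeasurableSet A → volume (f '' A) = volume A) :
    ∀ x ∈ Ω, ∃ ε > 0,
      ∀ u ∈ ball x ε, ∀ v ∈ ball x ε, ‖f u - f v‖ = ‖u - v‖ := by
  have hf : LipschitzOnWith 1 f Ω :=
    .mk_one fun u hu v hv => by simpa only [dist_eq_norm] using hlip u hu v hv
  intro x hx
  obtain ⟨r, hr, hball⟩ := Metric.isOpen_iff.mp hΩ x hx
  refine ⟨r / 2, half_pos hr, fun u hu v hv => ?_⟩
  have hd : dist u v < r := by linarith [dist_triangle_right u v x, mem_ball.mp hu, mem_ball.mp hv]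
  have hsub : ∀ w ∈ ball x (r / 2), ball w (dist u v / 2) ⊆ Ω := fun w hw =>
    (ball_subset_ball' (by linarith [mem_ball.mp hw])).trans hball
  have hΩ' : ball x (r / 2) ⊆ Ω := (ball_subset_ball (half_le_self hr.le)).trans hball
  refine le_antisymm (hlip u (hΩ' hu) v (hΩ' hv)) ?_
  simpa only [dist_eq_norm] using
    dist_le_dist_of_lipschitzOnWith_one_of_measure_image_eq hf hvol (hsub u hu) (hsub v hv)
end
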